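/- arXiv:1709.06068 — 2 statements merged into one kernel-verified Lean document; each statement's English description precedes it below -/
import Mathlib

section
/- Let Q be a nondegenerate parallelotope and S a nondegenerate simplex in R^n with S ⊆ Q ⊆ nS (nS the homothety of S about its centroid with ratio n). Then the centroid of S coincides with the center of Q. -/
open Finset MeasureTheory

/-- The unit cube `[0,1]^n` in `ℝ^n`. -/
def unitCube (n : ℕ) : Set (Fin n → ℝ) := {x | ∀ i, 0 ≤ x i ∧ x i ≤ 1}

/-- The set of vertices of the unit cube, i.e. `{0,1}^n`. -/
def cubeVerts (n : ℕ) : Set (Fin n → ℝ) := {x | ∀ i, x i = 0 ∨ x i = 1}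

/-- The (solid) simplex spanned by `n+1` points. -/
def simplexSet {n : ℕ} (v : Fin (n + 1) → (Fin n → ℝ)) : Set (Fin n → ℝ) :=
  convexHull ℝ (Set.range v)

/-- The centroid (center of gravity) of the simplex with vertices `v`. -/
noncomputable def simplexCentroid {n : ℕ} (v : Fin (n + 1) → (Fin n → ℝ)) : Fin n → ℝ :=
  ((n : ℝ) + 1)⁻¹ • ∑ j, v j

/-- The homothety of the simplex with vertices `v`, with center the centroid and ratio `σ`. -/
noncomputable def homSimplex {n : ℕ} (v : Fin (n + 1) → (Fin n → ℝ)) (σ : ℝ) : Set (Fin n → ℝ) :=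
  (fun x => simplexCentroid v + σ • (x - simplexCentroid v)) '' simplexSet v

/-- `ξ(S) = min {σ ≥ 1 : Q_n ⊆ σS}`. -/
noncomputable def xiVal {n : ℕ} (v : Fin (n + 1) → (Fin n → ℝ)) : ℝ :=
  sInf {σ : ℝ | 1 ≤ σ ∧ unitCube n ⊆ homSimplex v σ}

/-- A function `ℝ^n → ℝ` is an affine polynomial of degree at most 1. -/
def IsAffinePoly {n : ℕ} (f : (Fin n → ℝ) → ℝ) : Prop :=
  ∃ a : Fin n → ℝ, ∃ b : ℝ, ∀ x, f x = ∑ i, a i * x i + b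

/-- `lam` is the family of basic Lagrange polynomials of the simplex with vertices `v`. -/
def IsLagrangeBasis {n : ℕ} (v : Fin (n + 1) → (Fin n → ℝ))
    (lam : Fin (n + 1) → (Fin n → ℝ) → ℝ) : Prop :=
  (∀ j, IsAffinePoly (lam j)) ∧ ∀ j k, lam j (v k) = if j = k then 1 else 0

/-- The `i`-th axial diameter of a set `S ⊆ ℝ^n`: the supremum of lengths of segments
in `S` parallel to the `i`-th coordinate axis. -/
noncomputable def axialDiam {n : ℕ} (S : Set (Fin n → ℝ)) (i : Fin n) : ℝ :=
  sSup {t : ℝ | ∃ x ∈ S, ∃ y ∈ S, (∀ k, k ≠ i → x k = y k) ∧ y i - x i = t}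

/-!
Use barycentric coordinates `λ_j` with respect to the vertices of `S`; the centroid `g` has
`λ_j(g) = 1/(n+1)`, and the points of `nS` satisfy `λ_j ≥ (1-n)/(n+1)`. The parallelotope `Q` is
symmetric about its center `c`, so with each vertex `v_j ∈ S ⊆ Q` it contains `2c - v_j ∈ nS`,
whence `2λ_j(c) - 1 ≥ (1-n)/(n+1)`, i.e. `λ_j(c) ≥ 1/(n+1)`. As the `λ_j(c)` sum to `1`, all
these inequalities are equalities, so `c = g`.
-/

open AffineMap

namespace AffineBasis

variable {ι E : Type*} [AddCommGroup E] [Module ℝ E] (b : AffineBasis ι ℝ E)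

theorem coord_homothety (j : ι) (c x : E) (r : ℝ) :
    b.coord j (homothety c r x) = lineMap (b.coord j c) (b.coord j x) r := by
  rw [homothety_eq_lineMap, apply_lineMap]

theorem coord_pointReflection (j : ι) (c x : E) :
    b.coord j (AffineEquiv.pointReflection ℝ c x) = 2 * b.coord j c - b.coord j x := by
  rw [← homothety_neg_one_apply, coord_homothety, lineMap_apply_ring]
  ring

variable [Fintype ι]

theorem le_coord_of_mem_homothety_centroid {r : ℝ} (hr : 0 ≤ r) {p : E}
    (hp : p ∈ homothety (univ.centroid ℝ b) r '' convexHull ℝ (Set.range b)) (j : ι) :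
    (1 - r) * (Fintype.card ι : ℝ)⁻¹ ≤ b.coord j p := by
  obtain ⟨x, hx, rfl⟩ := hp
  rw [b.convexHull_eq_nonneg_coord] at hx
  rw [coord_homothety, b.coord_apply_centroid (mem_univ j), lineMap_apply_ring, card_univ]
  exact le_add_of_nonneg_right (mul_nonneg hr (hx j))

theorem eq_centroid_of_pointReflection_mem_homothety {c : E}
    (h : ∀ j, AffineEquiv.pointReflection ℝ c (b j) ∈
      homothety (univ.centroid ℝ b) ((Fintype.card ι : ℝ) - 1) '' convexHull ℝ (Set.range b)) :
    c = univ.centroid ℝ b := by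
  have hm : (1 : ℝ) ≤ Fintype.card ι := by
    have := b.nonempty
    exact_mod_cast Fintype.card_pos
  have hle : ∀ j ∈ univ, (Fintype.card ι : ℝ)⁻¹ ≤ b.coord j c := by
    intro j _
    have hj := b.le_coord_of_mem_homothety_centroid (by linarith) (h j) j
    rw [coord_pointReflection, coord_apply_eq] at hj
    have : (1 - ((Fintype.card ι : ℝ) - 1)) * (Fintype.card ι : ℝ)⁻¹ =
        2 * (Fintype.card ι : ℝ)⁻¹ - 1 := by
      field_simp
      ring
    linarith
  have hsum : ∑ _j : ι, (Fintype.card ι : ℝ)⁻¹ = ∑ j, b.coord j c := by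
    rw [sum_coord_apply_eq_one, sum_const, card_univ, nsmul_eq_mul, mul_inv_cancel₀ (by linarith)]
  refine b.ext_elem fun j => ?_
  rw [b.coord_apply_centroid (mem_univ j), card_univ]
  exact ((sum_eq_sum_iff_of_le hle).mp hsum j (mem_univ j)).symm

end AffineBasis

theorem AffineEquiv.map_pointReflection {E F : Type*} [AddCommGroup E] [Module ℝ E]
    [AddCommGroup F] [Module ℝ F] (f : E ≃ᵃ[ℝ] F) (c x : E) :
    f (AffineEquiv.pointReflection ℝ c x) = AffineEquiv.pointReflection ℝ (f c) (f x) := by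
  rw [← homothety_neg_one_apply, ← homothety_neg_one_apply, homothety_eq_lineMap,
    homothety_eq_lineMap, apply_lineMap]

theorem pointReflection_mem_unitCube {n : ℕ} {x : Fin n → ℝ} (hx : x ∈ unitCube n) :
    AffineEquiv.pointReflection ℝ (fun _ => (1 : ℝ) / 2) x ∈ unitCube n := by
  intro i
  simp only [AffineEquiv.pointReflection_apply, vsub_eq_sub, vadd_eq_add, Pi.add_apply,
    Pi.sub_apply]
  constructor <;> linarith [hx i]

theorem pointReflection_center_mem_parallelotope {n : ℕ} (f : (Fin n → ℝ) ≃ᵃ[ℝ] (Fin n → ℝ))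
    {y : Fin n → ℝ} (hy : y ∈ f '' unitCube n) :
    AffineEquiv.pointReflection ℝ (f fun _ => (1 : ℝ) / 2) y ∈ f '' unitCube n := by
  obtain ⟨x, hx, rfl⟩ := hy
  exact ⟨_, pointReflection_mem_unitCube hx, f.map_pointReflection _ _⟩

theorem simplexCentroid_eq_centroid {n : ℕ} (v : Fin (n + 1) → (Fin n → ℝ)) :
    simplexCentroid v = univ.centroid ℝ v := by
  rw [centroid_def, univ.affineCombination_eq_linear_combination v _
    (univ.sum_centroidWeights_eq_one_of_nonempty ℝ univ_nonempty), simplexCentroid, smul_sum]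
  simp [centroidWeights]

theorem homSimplex_eq_image_homothety {n : ℕ} (v : Fin (n + 1) → (Fin n → ℝ)) (σ : ℝ) :
    homSimplex v σ = homothety (univ.centroid ℝ v) σ '' simplexSet v := by
  rw [homSimplex, simplexCentroid_eq_centroid]
  congr 1
  ext x
  simp [homothety_apply, add_comm]

noncomputable def simplexBasis {n : ℕ} {v : Fin (n + 1) → (Fin n → ℝ)}
    (hv : AffineIndependent ℝ v) : AffineBasis (Fin (n + 1)) ℝ (Fin n → ℝ) :=
  ⟨v, hv, hv.affineSpan_eq_top_iff_card_eq_finrank_add_one.mpr (by simp)⟩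

/-- if `S ⊆ Q ⊆ nS` for a nondegenerate parallelotope `Q` (affine image of the
unit cube), then the centroid of `S` coincides with the center of `Q`. -/
theorem centroid_eq_center {n : ℕ} (v : Fin (n + 1) → (Fin n → ℝ))
    (hv : AffineIndependent ℝ v)
    (f : (Fin n → ℝ) ≃ᵃ[ℝ] (Fin n → ℝ))
    (hSQ : simplexSet v ⊆ f '' unitCube n)
    (hQS : f '' unitCube n ⊆ homSimplex v n) :
    simplexCentroid v = f (fun _ => (1 : ℝ) / 2) := by
  set b := simplexBasis hv
  have hbv : ⇑b = v := rfl
  rw [simplexCentroid_eq_centroid, ← hbv]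
  refine (b.eq_centroid_of_pointReflection_mem_homothety fun j => ?_).symm
  have hvertex : b j ∈ f '' unitCube n := hSQ (subset_convexHull ℝ _ ⟨j, rfl⟩)
  have hm : ((Fintype.card (Fin (n + 1)) : ℕ) : ℝ) - 1 = n := by simp
  rw [hm, hbv, ← simplexSet, ← homSimplex_eq_image_homothety]
  exact hQS (pointReflection_center_mem_parallelotope f hvertex)
end

section
/- Let S ⊂ R⁵ be the simplex with vertices (1/2,1,1/3,1,1), (1/2,0,1/3,1,1), (1/2,1/2,1/3,0,1), (1/2,1/2,0,1/3,0), (0,1/2,1,1/3,0), (1,1/2,1,1/3,0). Then S ⊆ Q₅ = [0,1]⁵, ξ(S) = 5, and every vertex of Q₅ lies on the boundary of 5S; i.e., S is a perfect simplex in R⁵. -/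
open Finset MeasureTheory

/-- The vertices of the perfect simplex `S ⊂ ℝ⁵`. -/
noncomputable def S5verts : Fin 6 → (Fin 5 → ℝ) :=
  ![![1/2, 1, 1/3, 1, 1], ![1/2, 0, 1/3, 1, 1], ![1/2, 1/2, 1/3, 0, 1],
    ![1/2, 1/2, 0, 1/3, 0], ![0, 1/2, 1, 1/3, 0], ![1, 1/2, 1, 1/3, 0]]

/-!
The basic Lagrange polynomials `λⱼ` of a simplex `S ⊆ ℝⁿ` are its barycentric coordinates, so
`σS = {x | ∀ j, (1 - σ)/(n + 1) ≤ λⱼ x}` and `Q_n ⊆ σS` exactly when `(1 - σ)/(n + 1)` is below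
the minimum of every `λⱼ` on `Q_n`. For the given simplex each `λⱼ` has minimum `-2/3` on `Q₅`,
which gives `ξ(S) = 5`, and every vertex of `Q₅` is a minimiser of some `λⱼ`, hence lies on a
facet of `5S`.
-/

open Filter Topology

namespace IsAffinePoly

variable {n : ℕ} {f : (Fin n → ℝ) → ℝ}

theorem apply_sum_smul (hf : IsAffinePoly f) {ι : Type*} (s : Finset ι) (w : ι → ℝ)
    (p : ι → Fin n → ℝ) :
    f (∑ k ∈ s, w k • p k) = ∑ k ∈ s, w k * f (p k) + (1 - ∑ k ∈ s, w k) * f 0 := by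
  obtain ⟨a, b, hf⟩ := hf
  simp only [hf, Finset.sum_apply, Pi.smul_apply, smul_eq_mul, Pi.zero_apply, mul_zero,
    Finset.sum_const_zero, zero_add, Finset.mul_sum, mul_add, Finset.sum_add_distrib,
    ← Finset.sum_mul]
  rw [Finset.sum_comm]
  simp only [mul_left_comm (a _)]
  ring

theorem apply_smul_add_smul (hf : IsAffinePoly f) {a b : ℝ} (hab : a + b = 1) (x y : Fin n → ℝ) :
    f (a • x + b • y) = a * f x + b * f y := by
  simpa [Fin.sum_univ_two, hab] using hf.apply_sum_smul Finset.univ ![a, b] ![x, y]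

theorem convex_setOf_le (hf : IsAffinePoly f) (c : ℝ) : Convex ℝ {x | c ≤ f x} := by
  intro x hx y hy a b ha hb hab
  simp only [Set.mem_ofPred_eq, hf.apply_smul_add_smul hab] at hx hy ⊢
  have hc : a * c + b * c = c := by rw [← add_mul, hab, one_mul]
  linarith [mul_le_mul_of_nonneg_left hx ha, mul_le_mul_of_nonneg_left hy hb]

end IsAffinePoly

namespace IsLagrangeBasis

variable {n : ℕ} {v : Fin (n + 1) → Fin n → ℝ} {lam : Fin (n + 1) → (Fin n → ℝ) → ℝ}

theorem apply_sum_smul (h : IsLagrangeBasis v lam) (w : Fin (n + 1) → ℝ) (j : Fin (n + 1)) :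
    lam j (∑ k, w k • v k) = w j + (1 - ∑ k, w k) * lam j 0 := by
  simp [(h.1 j).apply_sum_smul, h.2]

theorem affineIndependent (h : IsLagrangeBasis v lam) : AffineIndependent ℝ v := by
  rw [affineIndependent_iff_of_fintype]
  intro w hw hv j
  have := h.apply_sum_smul w j
  rw [← Finset.weightedVSub_eq_linear_combination _ hw, hv, hw] at this
  linarith

theorem exists_sum_smul_eq (h : IsLagrangeBasis v lam) (x : Fin n → ℝ) :
    ∃ w : Fin (n + 1) → ℝ, ∑ k, w k = 1 ∧ ∑ k, w k • v k = x := by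
  have hspan : affineSpan ℝ (Set.range v) = ⊤ :=
    h.affineIndependent.affineSpan_eq_top_iff_card_eq_finrank_add_one.2 (by simp)
  obtain ⟨w, hw, hx⟩ :=
    eq_affineCombination_of_mem_affineSpan_of_fintype (hspan ▸ AffineSubspace.mem_top ℝ _ x)
  exact ⟨w, hw, by rw [hx, Finset.affineCombination_eq_linear_combination _ _ _ hw]⟩

theorem apply_sum_smul_of_sum_eq_one (h : IsLagrangeBasis v lam) {w : Fin (n + 1) → ℝ}
    (hw : ∑ k, w k = 1) (j : Fin (n + 1)) : lam j (∑ k, w k • v k) = w j := by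
  simp [h.apply_sum_smul, hw]

theorem sum_apply (h : IsLagrangeBasis v lam) (x : Fin n → ℝ) : ∑ j, lam j x = 1 := by
  obtain ⟨w, hw, rfl⟩ := h.exists_sum_smul_eq x
  simp [h.apply_sum_smul_of_sum_eq_one hw, hw]

theorem sum_apply_smul (h : IsLagrangeBasis v lam) (x : Fin n → ℝ) :
    ∑ j, lam j x • v j = x := by
  obtain ⟨w, hw, rfl⟩ := h.exists_sum_smul_eq x
  simp [h.apply_sum_smul_of_sum_eq_one hw]

theorem mem_simplexSet_iff (h : IsLagrangeBasis v lam) {x : Fin n → ℝ} :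
    x ∈ simplexSet v ↔ ∀ j, 0 ≤ lam j x := by
  constructor
  · refine fun hx => convexHull_min (t := {x | ∀ j, 0 ≤ lam j x}) ?_ ?_ hx
    · rintro _ ⟨k, rfl⟩ j
      rw [h.2]
      split_ifs <;> norm_num
    · simp only [Set.ofPred_forall]
      exact convex_iInter fun j => (h.1 j).convex_setOf_le 0
  · intro hx
    rw [← h.sum_apply_smul x]
    exact (convex_convexHull ℝ _).sum_mem (fun j _ => hx j) (h.sum_apply x)
      (fun j _ => subset_convexHull ℝ _ (Set.mem_range_self j))

theorem apply_simplexCentroid (h : IsLagrangeBasis v lam) (j : Fin (n + 1)) :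
    lam j (simplexCentroid v) = ((n : ℝ) + 1)⁻¹ := by
  rw [simplexCentroid, Finset.smul_sum, h.apply_sum_smul_of_sum_eq_one]
  simp only [Finset.sum_const, Finset.card_univ, Fintype.card_fin, nsmul_eq_mul]
  push_cast
  field_simp

theorem apply_homothety (h : IsLagrangeBasis v lam) (σ : ℝ) (x : Fin n → ℝ) (j : Fin (n + 1)) :
    lam j (simplexCentroid v + σ • (x - simplexCentroid v)) =
      σ * lam j x + (1 - σ) / ((n : ℝ) + 1) := by
  have hx : simplexCentroid v + σ • (x - simplexCentroid v) =
      (1 - σ) • simplexCentroid v + σ • x := by module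
  rw [hx, (h.1 j).apply_smul_add_smul (by ring), h.apply_simplexCentroid]
  ring

theorem mem_homSimplex_iff (h : IsLagrangeBasis v lam) {σ : ℝ} (hσ : 0 < σ) {y : Fin n → ℝ} :
    y ∈ homSimplex v σ ↔ ∀ j, (1 - σ) / ((n : ℝ) + 1) ≤ lam j y := by
  set c := simplexCentroid v
  constructor
  · rintro ⟨x, hx, rfl⟩ j
    rw [h.apply_homothety]
    have := (h.mem_simplexSet_iff.1 hx) j
    nlinarith
  · intro hy
    refine ⟨c + σ⁻¹ • (y - c), h.mem_simplexSet_iff.2 fun j => ?_, ?_⟩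
    · rw [h.apply_homothety]
      have key : σ⁻¹ * ((1 - σ) / ((n : ℝ) + 1)) + (1 - σ⁻¹) / ((n : ℝ) + 1) = 0 := by
        field_simp
        ring
      nlinarith [mul_le_mul_of_nonneg_left (hy j) (inv_nonneg.2 hσ.le)]
    · show c + σ • (c + σ⁻¹ • (y - c) - c) = y
      rw [add_sub_cancel_left, smul_smul, mul_inv_cancel₀ hσ.ne', one_smul, add_sub_cancel]

theorem mem_frontier_homSimplex (h : IsLagrangeBasis v lam) {σ : ℝ} (hσ : 0 < σ)
    {y : Fin n → ℝ} (hy : y ∈ homSimplex v σ) {j : Fin (n + 1)}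
    (hj : lam j y = (1 - σ) / ((n : ℝ) + 1)) : y ∈ frontier (homSimplex v σ) := by
  set c := simplexCentroid v
  rw [frontier_eq_closure_inter_closure]
  refine ⟨subset_closure hy, ?_⟩
  -- moving from `y` straight away from the centroid strictly decreases `lam j`
  have hlim : Tendsto (fun t : ℝ => y + t • (y - c)) (𝓝[>] 0) (𝓝 y) := by
    have hcont : Continuous fun t : ℝ => y + t • (y - c) := by fun_prop
    simpa using (hcont.tendsto 0).mono_left nhdsWithin_le_nhds
  refine mem_closure_of_tendsto hlim (eventually_nhdsWithin_of_forall fun t (ht : 0 < t) => ?_)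
  rw [Set.mem_compl_iff, h.mem_homSimplex_iff hσ, not_forall]
  refine ⟨j, not_le.2 ?_⟩
  have hyt : y + t • (y - c) = (1 + t) • y + (-t) • c := by module
  rw [hyt, (h.1 j).apply_smul_add_smul (by ring), h.apply_simplexCentroid, hj]
  have hdec : 0 < t * σ / ((n : ℝ) + 1) := by positivity
  have e : (1 + t) * ((1 - σ) / ((n : ℝ) + 1)) + -t * ((n : ℝ) + 1)⁻¹ =
      (1 - σ) / ((n : ℝ) + 1) - t * σ / ((n : ℝ) + 1) := by ring
  linarith

end IsLagrangeBasis

theorem unitCube_eq_Icc (n : ℕ) : unitCube n = Set.Icc 0 1 := by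
  ext x
  simp only [unitCube, Set.mem_ofPred_eq, Set.mem_Icc, Pi.le_def, Pi.zero_apply, Pi.one_apply]
  exact forall_and

theorem simplexSet_subset_unitCube {n : ℕ} {v : Fin (n + 1) → Fin n → ℝ}
    (hv : ∀ k, v k ∈ unitCube n) : simplexSet v ⊆ unitCube n :=
  convexHull_min (Set.range_subset_iff.2 hv) (unitCube_eq_Icc n ▸ convex_Icc 0 1)

theorem cubeVerts_subset_unitCube (n : ℕ) : cubeVerts n ⊆ unitCube n := by
  intro x hx i
  rcases hx i with h | h <;> simp [h]

/-- The basic Lagrange polynomials of `S`: the rows of the inverse of the vertex matrix of `S` in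
homogeneous coordinates. -/
noncomputable def S5lagrange (j : Fin 6) (x : Fin 5 → ℝ) : ℝ :=
  ∑ i, !![0, 1, 0, 1/2, 1/6; 0, -1, 0, 1/2, 1/6; 0, 0, 0, -1, 2/3;
      0, 0, -1, 0, -2/3; -1, 0, 1/2, 0, -1/6; 1, 0, 1/2, 0, -1/6] j i * x i +
    ![-2/3, 1/3, 1/3, 1, 1/2, -1/2] j

theorem isLagrangeBasis_S5lagrange : IsLagrangeBasis S5verts S5lagrange := by
  refine ⟨fun j => ⟨_, _, fun x => rfl⟩, fun j k => ?_⟩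
  fin_cases j <;> fin_cases k <;> norm_num [S5lagrange, S5verts, Fin.sum_univ_succ]

theorem S5verts_mem_unitCube (k : Fin 6) : S5verts k ∈ unitCube 5 := by
  intro i
  fin_cases k <;> fin_cases i <;> norm_num [S5verts]

theorem S5lagrange_apply (x : Fin 5 → ℝ) :
    S5lagrange 0 x = x 1 + x 3 / 2 + x 4 / 6 - 2/3 ∧
    S5lagrange 1 x = -x 1 + x 3 / 2 + x 4 / 6 + 1/3 ∧
    S5lagrange 2 x = -x 3 + 2/3 * x 4 + 1/3 ∧
    S5lagrange 3 x = -x 2 - 2/3 * x 4 + 1 ∧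
    S5lagrange 4 x = -x 0 + x 2 / 2 - x 4 / 6 + 1/2 ∧
    S5lagrange 5 x = x 0 + x 2 / 2 - x 4 / 6 - 1/2 := by
  refine ⟨?_, ?_, ?_, ?_, ?_, ?_⟩ <;>
    simp only [S5lagrange, Fin.sum_univ_five, Matrix.of_apply, Matrix.cons_val] <;> ring

theorem neg_two_thirds_le_S5lagrange {x : Fin 5 → ℝ} (hx : x ∈ unitCube 5) (j : Fin 6) :
    -2/3 ≤ S5lagrange j x := by
  obtain ⟨e0, e1, e2, e3, e4, e5⟩ := S5lagrange_apply x
  have := hx 0; have := hx 1; have := hx 2; have := hx 3; have := hx 4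
  fin_cases j <;> simp only [Fin.zero_eta, Fin.mk_one, Fin.reduceFinMk] <;> linarith

theorem exists_S5lagrange_eq_neg_two_thirds {w : Fin 5 → ℝ} (hw : w ∈ cubeVerts 5) :
    ∃ j, S5lagrange j w = -2/3 := by
  obtain ⟨e0, e1, e2, e3, e4, e5⟩ := S5lagrange_apply w
  rcases hw 4 with h4 | h4
  · rcases hw 3 with h3 | h3
    · rcases hw 1 with h1 | h1
      · exact ⟨0, by linarith⟩
      · exact ⟨1, by linarith⟩
    · exact ⟨2, by linarith⟩
  · rcases hw 2 with h2 | h2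
    · rcases hw 0 with h0 | h0
      · exact ⟨5, by linarith⟩
      · exact ⟨4, by linarith⟩
    · exact ⟨3, by linarith⟩

/-- `S ⊆ Q₅`, `ξ(S) = 5`, and every vertex of `Q₅` lies on the boundary of
`5S`; i.e. `S` is a perfect simplex in `ℝ⁵`. -/
theorem S5_perfect :
    simplexSet S5verts ⊆ unitCube 5 ∧
    xiVal S5verts = 5 ∧
    ∀ w ∈ cubeVerts 5, w ∈ frontier (homSimplex S5verts 5) := by
  have hL := isLagrangeBasis_S5lagrange
  have hfacet : (1 - 5) / (((5 : ℕ) : ℝ) + 1) = (-2/3 : ℝ) := by norm_num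
  have hcube : unitCube 5 ⊆ homSimplex S5verts 5 := fun x hx =>
    (hL.mem_homSimplex_iff (by norm_num)).2 fun j =>
      hfacet.trans_le (neg_two_thirds_le_S5lagrange hx j)
  refine ⟨simplexSet_subset_unitCube S5verts_mem_unitCube,
    IsLeast.csInf_eq ⟨⟨by norm_num, hcube⟩, ?_⟩, fun w hw => ?_⟩
  · rintro σ ⟨hσ, hsub⟩
    have hzero : (0 : Fin 5 → ℝ) ∈ unitCube 5 := fun _ => ⟨le_rfl, zero_le_one⟩
    have hle := (hL.mem_homSimplex_iff (by linarith)).1 (hsub hzero) 0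
    have hval : S5lagrange 0 0 = -2/3 := by norm_num [S5lagrange]
    rw [hval] at hle
    linarith
  · obtain ⟨j, hj⟩ := exists_S5lagrange_eq_neg_two_thirds hw
    exact hL.mem_frontier_homSimplex (by norm_num) (hcube (cubeVerts_subset_unitCube 5 hw))
      (hj.trans hfacet.symm)
end
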